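/- Let A ∈ ℝ^{m×d}, Y ∈ ℝ^{m×n}, λ > 0, and 1 ≤ q < 2. Let X_k ∈ ℝ^{d×n} be such that every row of AX_k − Y is nonzero. Define the diagonal matrix G_k ∈ ℝ^{m×m} with (G_k)_{ii} = 1/‖(AX_k − Y)^i‖₂^{2−q}, define Q_k(X) = Tr((AX − Y)ᵀG_k(AX − Y)) + λ·(2/q)·Tr(XᵀX), and define J(X) = Σ_{i=1}^m ‖(AX − Y)^i‖₂^q + λ·Σ_{i=1}^d ‖X^i‖₂². If X_{k+1} ∈ ℝ^{d×n} satisfies Q_k(X_{k+1}) ≤ Q_k(X_k), then J(X_{k+1}) ≤ J(X_k). -/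

import Mathlib

/-!
The weights `G_k` make `Q_k` a quadratic majorant of `J` up to scaling. For `0 ≤ q ≤ 2`,
weighted AM-GM applied to `a²` and `b²` with weights `q/2` and `1 - q/2` gives the tangent-line
bound of the concave map `t ↦ t^{q/2}` at `t = b²`,
`a^q ≤ b^q + (q/2) · (a² - b²) / b^{2-q}`.
Summed over the rows of the residual, this bounds the decrease of `∑ ‖R^i‖^q` by `q/2` times the
decrease of the weighted trace term of `Q_k`, which the hypothesis trades against the increase of
the ridge term.
-/

open Matrix

/-- Euclidean norm of the i-th row of a matrix. -/
noncomputable def rowNorm {m n : ℕ} (M : Matrix (Fin m) (Fin n) ℝ) (i : Fin m) : ℝ :=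
  Real.sqrt (∑ j, M i j ^ 2)

lemma sq_rpow_half {a : ℝ} (ha : 0 ≤ a) (r : ℝ) : (a ^ 2) ^ (r / 2) = a ^ r := by
  rw [← Real.rpow_natCast, ← Real.rpow_mul ha]
  ring_nf

lemma rpow_le_add_mul_sq_sub_sq {a b q : ℝ} (ha : 0 ≤ a) (hb : 0 < b) (hq0 : 0 ≤ q)
    (hq2 : q ≤ 2) : a ^ q ≤ b ^ q + q / 2 * (1 / b ^ (2 - q)) * (a ^ 2 - b ^ 2) := by
  have hc : 0 < b ^ (2 - q) := Real.rpow_pos_of_pos hb _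
  have hbc : b ^ q * b ^ (2 - q) = b ^ 2 := by
    rw [← Real.rpow_add hb]; norm_num
  have hamgm : a ^ q * b ^ (2 - q) ≤ q / 2 * a ^ 2 + (2 - q) / 2 * b ^ 2 := by
    have := Real.geom_mean_le_arith_mean2_weighted (w₁ := q / 2) (w₂ := (2 - q) / 2)
      (p₁ := a ^ 2) (p₂ := b ^ 2) (by linarith) (by linarith) (by positivity) (by positivity)
      (by ring)
    rwa [sq_rpow_half ha, sq_rpow_half hb.le] at this
  rw [← le_div_iff₀ hc] at hamgm
  calc a ^ q ≤ _ := hamgm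
    _ = _ := by field_simp; rw [← hbc]; ring

section rowNorm

variable {m n : ℕ}

lemma rowNorm_nonneg (M : Matrix (Fin m) (Fin n) ℝ) (i : Fin m) : 0 ≤ rowNorm M i :=
  Real.sqrt_nonneg _

lemma rowNorm_sq (M : Matrix (Fin m) (Fin n) ℝ) (i : Fin m) :
    rowNorm M i ^ 2 = ∑ j, M i j ^ 2 :=
  Real.sq_sqrt (by positivity)

lemma rowNorm_pos {M : Matrix (Fin m) (Fin n) ℝ} {i : Fin m} (h : M i ≠ 0) :
    0 < rowNorm M i := by
  obtain ⟨j, hj⟩ := Function.ne_iff.mp h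
  exact Real.sqrt_pos.mpr <| (Finset.sum_pos_iff_of_nonneg fun j _ => sq_nonneg (M i j)).mpr
    ⟨j, Finset.mem_univ j, sq_pos_of_ne_zero hj⟩

lemma trace_transpose_mul_diagonal_mul (g : Fin m → ℝ) (M : Matrix (Fin m) (Fin n) ℝ) :
    trace (Mᵀ * diagonal g * M) = ∑ i, g i * rowNorm M i ^ 2 := by
  rw [Matrix.mul_assoc, trace_mul_comm]
  simp only [trace, diag, mul_apply, diagonal_apply, ite_mul, zero_mul, Finset.sum_ite_eq,
    Finset.mem_univ, if_true, transpose_apply, rowNorm_sq, Finset.mul_sum]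
  exact Finset.sum_congr rfl fun i _ => Finset.sum_congr rfl fun j _ => by ring

lemma trace_transpose_mul_self (M : Matrix (Fin m) (Fin n) ℝ) :
    trace (Mᵀ * M) = ∑ i, rowNorm M i ^ 2 := by
  simpa using trace_transpose_mul_diagonal_mul 1 M

lemma sum_rowNorm_rpow_le {R R' : Matrix (Fin m) (Fin n) ℝ} (hR : ∀ i, R i ≠ 0) {q : ℝ}
    (hq0 : 0 ≤ q) (hq2 : q ≤ 2) :
    let G := diagonal fun i => 1 / rowNorm R i ^ (2 - q)
    ∑ i, rowNorm R' i ^ q ≤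
      ∑ i, rowNorm R i ^ q + q / 2 * (trace (R'ᵀ * G * R') - trace (Rᵀ * G * R)) := by
  intro G
  simp only [G, trace_transpose_mul_diagonal_mul, Finset.mul_sum, ← Finset.sum_sub_distrib,
    ← Finset.sum_add_distrib]
  refine Finset.sum_le_sum fun i _ => ?_
  calc rowNorm R' i ^ q
      ≤ _ := rpow_le_add_mul_sq_sub_sq (rowNorm_nonneg R' i) (rowNorm_pos (hR i)) hq0 hq2
    _ = _ := by ring

end rowNorm

theorem stmt_14_general {m d n : ℕ} (A : Matrix (Fin m) (Fin d) ℝ) (Y : Matrix (Fin m) (Fin n) ℝ)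
    (lam q : ℝ) (hq1 : 1 ≤ q) (hq2 : q < 2)
    (Xk Xk1 : Matrix (Fin d) (Fin n) ℝ)
    (hrowR : ∀ i, (A * Xk - Y) i ≠ 0) :
    let Gk : Matrix (Fin m) (Fin m) ℝ :=
      Matrix.diagonal (fun i => 1 / rowNorm (A * Xk - Y) i ^ (2 - q))
    let Qk : Matrix (Fin d) (Fin n) ℝ → ℝ := fun X =>
      Matrix.trace ((A * X - Y)ᵀ * Gk * (A * X - Y)) + lam * (2 / q) * Matrix.trace (Xᵀ * X)
    let J : Matrix (Fin d) (Fin n) ℝ → ℝ := fun X =>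
      ∑ i, rowNorm (A * X - Y) i ^ q + lam * ∑ i, rowNorm X i ^ 2
    Qk Xk1 ≤ Qk Xk → J Xk1 ≤ J Xk := by
  intro Gk Qk J hQ
  have hq0 : 0 < q := by linarith
  have hmaj := sum_rowNorm_rpow_le (R' := A * Xk1 - Y) hrowR hq0.le hq2.le
  simp only [Qk, J, Gk, trace_transpose_mul_self] at hQ hmaj ⊢
  have hscale : ∀ S, q / 2 * (lam * (2 / q) * S) = lam * S := fun S => by field_simp
  have hQ_scaled := mul_le_mul_of_nonneg_left hQ (by positivity : 0 ≤ q / 2)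
  rw [mul_add, mul_add, hscale, hscale] at hQ_scaled
  linarith

/-- One-step descent of the IQM in the case p = 2: if Q_k(X_{k+1}) ≤ Q_k(X_k)
then J(X_{k+1}) ≤ J(X_k), for 1 ≤ q < 2. -/
theorem stmt_14 {m d n : ℕ} (A : Matrix (Fin m) (Fin d) ℝ) (Y : Matrix (Fin m) (Fin n) ℝ)
    (lam q : ℝ) (hlam : 0 < lam) (hq1 : 1 ≤ q) (hq2 : q < 2)
    (Xk Xk1 : Matrix (Fin d) (Fin n) ℝ)
    (hrowR : ∀ i, (A * Xk - Y) i ≠ 0) :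
    let Gk : Matrix (Fin m) (Fin m) ℝ :=
      Matrix.diagonal (fun i => 1 / rowNorm (A * Xk - Y) i ^ (2 - q))
    let Qk : Matrix (Fin d) (Fin n) ℝ → ℝ := fun X =>
      Matrix.trace ((A * X - Y)ᵀ * Gk * (A * X - Y)) + lam * (2 / q) * Matrix.trace (Xᵀ * X)
    let J : Matrix (Fin d) (Fin n) ℝ → ℝ := fun X =>
      ∑ i, rowNorm (A * X - Y) i ^ q + lam * ∑ i, rowNorm X i ^ 2
    Qk Xk1 ≤ Qk Xk → J Xk1 ≤ J Xk :=
  stmt_14_general A Y lam q hq1 hq2 Xk Xk1 hrowR
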